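/- Let β₂ = (√30 − 5)/2 and β₃ = (7 − √19)/6. For every x₁ ∈ [β₂, β₃]: for all u ∈ [0, x₁), 1 + 2u < C(x₁,u), and for all u ∈ (x₁, 1], 2 + 2u > C(x₁,u). (Consequently the optimal second-stage threshold in the 4-observation Robbins problem satisfies h₂(x₁) = x₁ on [β₂, β₃].) -/
import Mathlib

set_option maxHeartbeats 1000000

/-- Expected final rank in Robbins' problem with 4 observations, first two observations
`x₁, x₂`, third accepted iff `≤ h`, fourth always accepted. -/
noncomputable def G (x₁ x₂ h : ℝ) : ℝ :=
  3/2 + h^2 - h + (2 - x₁ - x₂) * (1 - h) + max (h - x₁) 0 + max (h - x₂) 0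

/-- Optimal expected rank from rejecting the second observation:
`C x₁ x₂ = min_{t ∈ [0,1]} G x₁ x₂ t`. -/
noncomputable def C (x₁ x₂ : ℝ) : ℝ := sInf (G x₁ x₂ '' Set.Icc 0 1)

/-- Expected rank from accepting the second observation `u` given first observation `x`. -/
noncomputable def A (x u : ℝ) : ℝ := 1 + (if x ≤ u then (1:ℝ) else 0) + 2*u

theorem robbins_n4_h2_branch3 :
    ∀ x₁ ∈ Set.Icc ((Real.sqrt 30 - 5)/2) ((7 - Real.sqrt 19)/6),
      (∀ u ∈ Set.Ico (0:ℝ) x₁, 1 + 2*u < C x₁ u) ∧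
      (∀ u ∈ Set.Ioc x₁ (1:ℝ), 2 + 2*u > C x₁ u) := by
  intro x₁ hx₁
  obtain ⟨hxl, hxr⟩ := hx₁
  have s19 : Real.sqrt 19 ^ 2 = 19 := Real.sq_sqrt (by norm_num)
  have s19nn : (0:ℝ) ≤ Real.sqrt 19 := Real.sqrt_nonneg 19
  have s30 : Real.sqrt 30 ^ 2 = 30 := Real.sq_sqrt (by norm_num)
  have s30nn : (0:ℝ) ≤ Real.sqrt 30 := Real.sqrt_nonneg 30
  have s19lb : (4.3:ℝ) ≤ Real.sqrt 19 := by nlinarith [s19, s19nn]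
  have s30lb : (5.477:ℝ) ≤ Real.sqrt 30 := by nlinarith [s30, s30nn]
  have hq2 : 4*x₁^2 + 20*x₁ - 5 ≥ 0 := by nlinarith [s30, s30nn]
  have hq3 : 3*x₁^2 - 7*x₁ + 5/2 ≥ 0 := by nlinarith [s19, s19nn]
  have hx1lb : (0.238:ℝ) ≤ x₁ := by nlinarith [s30lb]
  have hx1ub : x₁ ≤ 0.45 := by nlinarith [s19lb]
  constructor
  · intro u hu
    obtain ⟨hu0, hux⟩ := hu
    have key : ∀ h ∈ Set.Icc (0:ℝ) 1, 1 + u + x₁ ≤ G x₁ u h := by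
      intro h hh
      obtain ⟨h0, h1⟩ := hh
      unfold G
      rcases le_total h u with hc | hc
      · rw [max_eq_right (by linarith), max_eq_right (by linarith)]
        linarith [hq3,
          mul_nonneg (by linarith : (0:ℝ) ≤ u - h) (by linarith : (0:ℝ) ≤ 3 - x₁ - 2*u - h),
          mul_nonneg (by linarith : (0:ℝ) ≤ x₁ - u) (by linarith : (0:ℝ) ≤ 5 - 3*x₁ - 2*u)]
      · rcases le_total h x₁ with hd | hd
        · rw [max_eq_right (by linarith), max_eq_left (by linarith)]
          linarith [hq3,
            mul_nonneg (by linarith : (0:ℝ) ≤ x₁ - h) (by linarith : (0:ℝ) ≤ 2 - 2*x₁ - u - h),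
            mul_nonneg (by linarith : (0:ℝ) ≤ x₁ - u) (by linarith : (0:ℝ) ≤ 3 - x₁)]
        · rw [max_eq_left (by linarith), max_eq_left (by linarith)]
          rcases le_total (3*x₁ + u) 1 with he | he
          · linarith [sq_nonneg (2*h - 1 + x₁ + u),
              mul_nonneg (by linarith : (0:ℝ) ≤ u) (by linarith : (0:ℝ) ≤ 1 - x₁ - u),
              mul_nonneg (by linarith : (0:ℝ) ≤ 1 - 3*x₁ - u) (by linarith : (0:ℝ) ≤ 11 + x₁),
              sq_nonneg x₁, hx1lb]
          · linarith [hq3,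
              mul_nonneg (by linarith : (0:ℝ) ≤ x₁ - u) (by linarith : (0:ℝ) ≤ 3 - x₁),
              mul_nonneg (by linarith : (0:ℝ) ≤ h - x₁) (by linarith : (0:ℝ) ≤ h + 2*x₁ + u - 1)]
    have hC : 1 + u + x₁ ≤ C x₁ u := by
      apply le_csInf
      · exact ⟨G x₁ u 0, Set.mem_image_of_mem _ (Set.mem_Icc.2 ⟨le_refl 0, by norm_num⟩)⟩
      · rintro b ⟨h, hh, rfl⟩
        exact key h hh
    linarith
  · intro u hu
    obtain ⟨hxu, hu1⟩ := hu
    have hbdd : BddBelow (G x₁ u '' Set.Icc 0 1) := by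
      refine ⟨0, ?_⟩
      rintro b ⟨h, ⟨h0, h1⟩, rfl⟩
      unfold G
      have hmu : 0 ≤ max (h - u) 0 := le_max_right _ _
      have hmx : 0 ≤ max (h - x₁) 0 := le_max_right _ _
      linarith [sq_nonneg (2*h - 1),
        mul_nonneg (by linarith : (0:ℝ) ≤ 2 - x₁ - u) (by linarith : (0:ℝ) ≤ 1 - h)]
    rcases le_total u ((1 - x₁)/3) with hc | hc
    · have htu : u ≤ (1 - x₁ - u)/2 := by linarith
      have hCle : C x₁ u ≤ G x₁ u ((1 - x₁ - u)/2) :=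
        csInf_le hbdd (Set.mem_image_of_mem _ (Set.mem_Icc.2 ⟨by linarith, by linarith⟩))
      have hGt : G x₁ u ((1 - x₁ - u)/2) < 2 + 2*u := by
        unfold G
        rw [max_eq_left (by linarith), max_eq_left (by linarith)]
        linarith [hq2, mul_pos (by linarith : (0:ℝ) < u - x₁) (by linarith : (0:ℝ) < 14 + 3*x₁ + u)]
      linarith
    · have hCle : C x₁ u ≤ G x₁ u u :=
        csInf_le hbdd (Set.mem_image_of_mem _ (Set.mem_Icc.2 ⟨by linarith, hu1⟩))
      have hGt : G x₁ u u < 2 + 2*u := by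
        unfold G
        rw [max_eq_left (by linarith), max_eq_left (by linarith)]
        linarith [mul_nonneg (by linarith : (0:ℝ) ≤ 3*u - 1 + x₁) (by linarith : (0:ℝ) ≤ 1 - u),
          mul_pos (by linarith : (0:ℝ) < u - x₁) (by linarith : (0:ℝ) < 7 - x₁),
          mul_nonneg (by linarith : (0:ℝ) ≤ x₁) (by linarith : (0:ℝ) ≤ 0.45 - x₁), hx1lb]
      linarith
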